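/- arXiv:1308.6235 — 4 statements merged into one kernel-verified Lean document; each statement's English description precedes it below -/
import Mathlib

section
/- Let w : [-1,1] → ℝ be continuous with w ≥ 0 on [-1,1] and w(x) > 0 for every x ∈ (-1,1). Then for every δ > 0 there exists a constant K(δ) > 0 such that for every twice continuously differentiable function v : [-1,1] → ℝ with v(±1) = v'(±1) = 0 one has ∫_{-1}^{1} |v'(x)|² dx ≤ δ ∫_{-1}^{1} |v''(x)|² dx + K(δ) ( ∫_{-1}^{1} w(x)|v(x)| dx )². -/
open MeasureTheory Set

/-!
Integrating by parts, `∫ v'² = -∫ v v'' ≤ ∫ v² / (2δ) + (δ/2) ∫ v''²`, so it suffices to control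
`∫ v²`. With `N = ∫ |v''|`, Cauchy–Schwarz gives `N² ≤ 2 ∫ v''²`, and the clamped boundary
conditions give `|v'| ≤ N`, hence `|v x| ≤ N · dist(x, {±1})`. On the strips of width `η` at `±1`
this is at most `ηN`; on the middle part `w` is bounded below by some `c > 0`, so `|v| ≤ w |v| / c`
there. Hence `∫ v² ≤ N (∫ w |v| / c + 2ηN)`, and with `η = δ²/8` Young's inequality on
`N ∫ w |v|` absorbs everything into `δ ∫ v''²` plus `(∫ w |v|)² / (2δ³c²)`.
-/

theorem sq_integral_abs_le_mul_integral_sq {f : ℝ → ℝ} {a b : ℝ} (hab : a ≤ b)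
    (hf : Continuous f) :
    (∫ x in a..b, |f x|) ^ 2 ≤ (b - a) * ∫ x in a..b, f x ^ 2 := by
  set I := ∫ x in a..b, |f x|
  rcases hab.eq_or_lt with rfl | hlt
  · simp [I]
  have hL : 0 < b - a := sub_pos.2 hlt
  set m := I / (b - a)
  have key : ∫ x in a..b, 2 * m * |f x| ≤ ∫ x in a..b, (f x ^ 2 + m ^ 2) :=
    intervalIntegral.integral_mono_on hab ((hf.abs.intervalIntegrable _ _).const_mul _)
      ((hf.pow 2).add continuous_const |>.intervalIntegrable _ _) fun x _ => by
        rw [← sq_abs (f x), add_comm]; exact two_mul_le_add_sq m |f x|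
  rw [intervalIntegral.integral_const_mul,
    intervalIntegral.integral_add (f := fun x => f x ^ 2) ((hf.pow 2).intervalIntegrable _ _)
      intervalIntegrable_const,
    intervalIntegral.integral_const, smul_eq_mul] at key
  have hm : 2 * m * I - (b - a) * m ^ 2 = I ^ 2 / (b - a) := by
    simp only [m]; field_simp; ring
  rw [← div_le_iff₀' hL]
  linarith

theorem abs_le_integral_abs_deriv_of_eq_zero {f : ℝ → ℝ} {a b x : ℝ} (hf : ContDiff ℝ 1 f)
    (ha : f a = 0) (hx : x ∈ Icc a b) :
    |f x| ≤ ∫ t in a..b, |deriv f t| := by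
  have hf' := hf.continuous_deriv_one
  calc |f x| = |∫ t in a..x, deriv f t| := by
        rw [intervalIntegral.integral_deriv_eq_sub
          (fun t _ => (hf.differentiable one_ne_zero).differentiableAt)
          (hf'.intervalIntegrable _ _), ha, sub_zero]
    _ ≤ ∫ t in a..x, |deriv f t| := intervalIntegral.abs_integral_le_integral_abs hx.1
    _ ≤ ∫ t in a..b, |deriv f t| :=
        intervalIntegral.integral_mono_interval le_rfl hx.1 hx.2
          (Filter.Eventually.of_forall fun t => abs_nonneg _) (hf'.abs.intervalIntegrable _ _)

theorem abs_le_mul_min_of_abs_deriv_le {f : ℝ → ℝ} {a b x M : ℝ} (hf : Differentiable ℝ f)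
    (hM : ∀ t ∈ Icc a b, |deriv f t| ≤ M) (ha : f a = 0) (hb : f b = 0) (hx : x ∈ Icc a b) :
    |f x| ≤ M * min (x - a) (b - x) := by
  have hab : a ≤ b := hx.1.trans hx.2
  have hM₀ : 0 ≤ M := (abs_nonneg _).trans (hM a ⟨le_rfl, hab⟩)
  have lip : ∀ y ∈ Icc a b, |f x - f y| ≤ M * |x - y| := fun y hy =>
    (convex_Icc a b).norm_image_sub_le_of_norm_deriv_le (fun t _ => hf t) hM hy hx
  have hleft := lip a ⟨le_rfl, hab⟩
  have hright := lip b ⟨hab, le_rfl⟩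
  rw [ha, sub_zero, abs_of_nonneg (sub_nonneg.2 hx.1)] at hleft
  rw [hb, sub_zero, abs_of_nonpos (sub_nonpos.2 hx.2), neg_sub] at hright
  rw [mul_min_of_nonneg _ _ hM₀]
  exact le_min hleft hright

theorem abs_le_weighted_add_of_abs_le_mul_min {g w : ℝ → ℝ} {a b c η M x : ℝ} (hc : 0 < c)
    (hη : 0 ≤ η) (hM : 0 ≤ M) (hw : 0 ≤ w x) (hcw : ∀ y ∈ Icc (a + η) (b - η), c ≤ w y)
    (hg : |g x| ≤ M * min (x - a) (b - x)) :
    |g x| ≤ w x * |g x| / c + η * M := by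
  by_cases hmid : x ∈ Icc (a + η) (b - η)
  · have : |g x| ≤ w x * |g x| / c := by
      rw [le_div_iff₀ hc, mul_comm]
      exact mul_le_mul_of_nonneg_right (hcw x hmid) (abs_nonneg _)
    nlinarith
  · have hmin : min (x - a) (b - x) ≤ η := by
      rw [mem_Icc, not_and_or, not_le, not_le] at hmid
      rcases hmid with h | h
      · exact (min_le_left _ _).trans (by linarith)
      · exact (min_le_right _ _).trans (by linarith)
    have : 0 ≤ w x * |g x| / c := by positivity
    nlinarith [mul_le_mul_of_nonneg_left hmin hM]

theorem integral_sq_le_of_abs_le_weighted {g w : ℝ → ℝ} {a b c η M : ℝ} (hab : a ≤ b)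
    (hg : Continuous g) (hw : ContinuousOn w (Icc a b)) (hgM : ∀ x ∈ Icc a b, |g x| ≤ M)
    (hgw : ∀ x ∈ Icc a b, |g x| ≤ w x * |g x| / c + η * M) :
    ∫ x in a..b, g x ^ 2 ≤ M * ((∫ x in a..b, w x * |g x|) / c + (b - a) * η * M) := by
  have hwg : IntervalIntegrable (fun x => w x * |g x|) volume a b :=
    (hw.mul hg.abs.continuousOn).intervalIntegrable_of_Icc hab
  calc ∫ x in a..b, g x ^ 2 ≤ ∫ x in a..b, M * (w x * |g x| / c + η * M) := by
        refine intervalIntegral.integral_mono_on hab ((hg.pow 2).intervalIntegrable _ _)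
          ((hwg.div_const c).add intervalIntegrable_const |>.const_mul M) fun x hx => ?_
        rw [← sq_abs, sq]
        exact mul_le_mul (hgM x hx) (hgw x hx) (abs_nonneg _) ((abs_nonneg _).trans (hgM x hx))
    _ = M * ((∫ x in a..b, w x * |g x|) / c + (b - a) * η * M) := by
        rw [intervalIntegral.integral_const_mul,
          intervalIntegral.integral_add (hwg.div_const c) intervalIntegrable_const,
          intervalIntegral.integral_div, intervalIntegral.integral_const, smul_eq_mul, mul_assoc]

theorem integral_deriv_sq_le {v : ℝ → ℝ} {a b δ : ℝ} (hab : a ≤ b) (hδ : 0 < δ)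
    (hv : ContDiff ℝ 2 v) (ha : v a = 0) (hb : v b = 0) :
    ∫ x in a..b, deriv v x ^ 2 ≤
      (∫ x in a..b, v x ^ 2) / (2 * δ) + δ / 2 * ∫ x in a..b, deriv (deriv v) x ^ 2 := by
  have hv' : ContDiff ℝ 1 (deriv v) := hv.deriv'
  have hv'' := hv'.continuous_deriv_one
  have ibp := intervalIntegral.integral_mul_deriv_eq_deriv_mul (a := a) (b := b)
    (fun x _ => (hv.differentiable two_ne_zero x).hasDerivAt)
    (fun x _ => (hv'.differentiable one_ne_zero x).hasDerivAt)
    (hv'.continuous.intervalIntegrable _ _) (hv''.intervalIntegrable _ _)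
  rw [ha, hb, zero_mul, zero_mul, sub_zero, zero_sub] at ibp
  have hsq : ∫ x in a..b, deriv v x ^ 2 = ∫ x in a..b, -(v x * deriv (deriv v) x) := by
    rw [intervalIntegral.integral_neg, ibp, neg_neg]; simp only [sq]
  have hv2 : IntervalIntegrable (fun x => v x ^ 2 / (2 * δ)) volume a b :=
    ((hv.continuous.pow 2).intervalIntegrable _ _).div_const _
  have hv''2 : IntervalIntegrable (fun x => δ / 2 * deriv (deriv v) x ^ 2) volume a b :=
    ((hv''.pow 2).intervalIntegrable _ _).const_mul _
  calc ∫ x in a..b, deriv v x ^ 2 = ∫ x in a..b, -(v x * deriv (deriv v) x) := hsq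
    _ ≤ ∫ x in a..b, (v x ^ 2 / (2 * δ) + δ / 2 * deriv (deriv v) x ^ 2) := by
        refine intervalIntegral.integral_mono_on hab
          ((hv.continuous.mul hv'').neg.intervalIntegrable _ _) (hv2.add hv''2) fun x _ => ?_
        rw [div_add' _ _ _ (by positivity), le_div_iff₀ (by positivity)]
        nlinarith [sq_nonneg (v x + δ * deriv (deriv v) x)]
    _ = _ := by
        rw [intervalIntegral.integral_add hv2 hv''2, intervalIntegral.integral_div,
          intervalIntegral.integral_const_mul]

theorem integral_sq_le_of_clamped {v w : ℝ → ℝ} {c η : ℝ} (hv : ContDiff ℝ 2 v)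
    (hv₁ : v (-1) = 0) (hv₂ : v 1 = 0) (hv'₁ : deriv v (-1) = 0)
    (hw_cont : ContinuousOn w (Icc (-1 : ℝ) 1)) (hw_nonneg : ∀ x ∈ Icc (-1 : ℝ) 1, 0 ≤ w x)
    (hc : 0 < c) (hη : 0 ≤ η) (hcw : ∀ x ∈ Icc (-1 + η) (1 - η), c ≤ w x) :
    ∫ x in (-1 : ℝ)..1, v x ^ 2 ≤ (∫ x in (-1 : ℝ)..1, |deriv (deriv v) x|) *
      ((∫ x in (-1 : ℝ)..1, w x * |v x|) / c + 2 * η * ∫ x in (-1 : ℝ)..1, |deriv (deriv v) x|) := by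
  set N := ∫ x in (-1 : ℝ)..1, |deriv (deriv v) x|
  have hN₀ : 0 ≤ N := intervalIntegral.integral_nonneg (by norm_num) fun _ _ => abs_nonneg _
  have hv_tent : ∀ x ∈ Icc (-1 : ℝ) 1, |v x| ≤ N * min (x - -1) (1 - x) :=
    fun x hx => abs_le_mul_min_of_abs_deriv_le (hv.differentiable two_ne_zero)
      (fun t ht => abs_le_integral_abs_deriv_of_eq_zero hv.deriv' hv'₁ ht) hv₁ hv₂ hx
  have := integral_sq_le_of_abs_le_weighted (by norm_num) hv.continuous hw_cont
    (fun x hx => (hv_tent x hx).trans (mul_le_of_le_one_right hN₀ (by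
      rw [min_le_iff]; by_contra! h; linarith)))
    (fun x hx => abs_le_weighted_add_of_abs_le_mul_min hc hη hN₀ (hw_nonneg x hx) hcw
      (hv_tent x hx))
  norm_num at this
  exact this

/-- A Poincaré-type inequality with a weighted L¹ correction term
on the interval (-1,1), for clamped C² functions. -/
theorem stmt_0
    (w : ℝ → ℝ)
    (hw_cont : ContinuousOn w (Icc (-1 : ℝ) 1))
    (hw_nonneg : ∀ x ∈ Icc (-1 : ℝ) 1, 0 ≤ w x)
    (hw_pos : ∀ x ∈ Ioo (-1 : ℝ) 1, 0 < w x) :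
    ∀ δ : ℝ, 0 < δ → ∃ K : ℝ, 0 < K ∧
      ∀ v : ℝ → ℝ, ContDiff ℝ 2 v →
        v (-1) = 0 → v 1 = 0 → deriv v (-1) = 0 → deriv v 1 = 0 →
        (∫ x in (-1 : ℝ)..1, (deriv v x) ^ 2) ≤
          δ * (∫ x in (-1 : ℝ)..1, (deriv (deriv v) x) ^ 2) +
            K * (∫ x in (-1 : ℝ)..1, w x * |v x|) ^ 2 := by
  intro δ hδ
  set η := δ ^ 2 / 8 with hη
  have hη₀ : 0 < η := by positivity
  obtain ⟨c, hc, hcw⟩ := (isCompact_Icc (a := -1 + η) (b := 1 - η)).exists_forall_le'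
    (hw_cont.mono (Icc_subset_Icc (by linarith) (by linarith)))
    fun x hx => hw_pos x ⟨by linarith [hx.1], by linarith [hx.2]⟩
  refine ⟨1 / (2 * δ ^ 3 * c ^ 2), by positivity, fun v hv hv₁ hv₂ hv'₁ _ => ?_⟩
  set A := ∫ x in (-1 : ℝ)..1, deriv (deriv v) x ^ 2
  set N := ∫ x in (-1 : ℝ)..1, |deriv (deriv v) x|
  set B := ∫ x in (-1 : ℝ)..1, w x * |v x|
  have hNA : N ^ 2 ≤ 2 * A := by
    have := sq_integral_abs_le_mul_integral_sq (by norm_num : (-1 : ℝ) ≤ 1)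
      hv.deriv'.continuous_deriv_one
    norm_num at this
    exact this
  have young : N * B / (2 * δ * c) ≤ δ / 8 * N ^ 2 + 1 / (2 * δ ^ 3 * c ^ 2) * B ^ 2 := by
    have hsq : 0 ≤ δ / 8 * (N - 2 * B / (δ ^ 2 * c)) ^ 2 := by positivity
    have e : δ / 8 * (N - 2 * B / (δ ^ 2 * c)) ^ 2
        = δ / 8 * N ^ 2 + 1 / (2 * δ ^ 3 * c ^ 2) * B ^ 2 - N * B / (2 * δ * c) := by
      field_simp; ring
    linarith
  calc ∫ x in (-1 : ℝ)..1, deriv v x ^ 2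
      ≤ (∫ x in (-1 : ℝ)..1, v x ^ 2) / (2 * δ) + δ / 2 * A :=
        integral_deriv_sq_le (by norm_num) hδ hv hv₁ hv₂
    _ ≤ N * (B / c + 2 * η * N) / (2 * δ) + δ / 2 * A := by
        gcongr
        exact integral_sq_le_of_clamped hv hv₁ hv₂ hv'₁ hw_cont hw_nonneg hc hη₀.le hcw
    _ = N * B / (2 * δ * c) + δ / 8 * N ^ 2 + δ / 2 * A := by
        rw [hη]; field_simp
    _ ≤ δ * A + 1 / (2 * δ ^ 3 * c ^ 2) * B ^ 2 := by nlinarith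
end

section
/- Let β > 0, τ ≥ 0, λ > 0, T ∈ (0,∞], and let (ζ₁, μ₁) be a principal eigenpair of the clamped operator β∂x⁴ − τ∂x² on (-1,1). Let u : [0,T) × [-1,1] → ℝ be such that the partial derivatives ∂t u and ∂x^k u for k = 1,…,4 exist and are jointly continuous, u(t,±1) = ∂x u(t,±1) = 0 for all t, u(t,x) > -1 for all (t,x), and ∂t u + β ∂x⁴ u − τ ∂x² u = − λ G on [0,T) × (-1,1), where G : [0,T) × (-1,1) → ℝ is continuous and nonnegative. Then for all t ∈ [0,T): ∫_{-1}^{1} ζ₁(x) |u(t,x)| dx ≤ 2 + ∫_{-1}^{1} ζ₁(x) u(t,x) dx ≤ 2 + ( ∫_{-1}^{1} ζ₁(x) u(0,x) dx ) e^{−μ₁ t}. -/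
open MeasureTheory Set
open scoped ENNReal

/-!
Testing the equation against the principal eigenfunction `ζ₁` and integrating by parts (both `ζ₁`
and `u t` are clamped, so no boundary terms survive) turns the elliptic part into
`μ₁ ∫ ζ₁ u`. As `λ G ≥ 0`, the weighted mean `E t = ∫ ζ₁ (u t)` satisfies `E' ≤ -μ₁ E`, and
Grönwall gives `E t ≤ E 0 e^{-μ₁ t}`. The first inequality is pointwise: `u > -1` gives
`|u| ≤ u + 2`, and `∫ ζ₁ = 1`.
-/

/-- A principal eigenpair `(ζ, μ)` of the clamped operator `β ∂x⁴ - τ ∂x²` on `(-1,1)`: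
`μ > 0` and `ζ` is a C⁴ function with clamped boundary conditions, positive on `(-1,1)`,
normalized in `L¹`, satisfying `β ζ'''' - τ ζ'' = μ ζ`. -/
def IsPrincipalEigenpair (β τ : ℝ) (ζ : ℝ → ℝ) (μ : ℝ) : Prop :=
  0 < μ ∧ ContDiff ℝ 4 ζ ∧
    ζ (-1) = 0 ∧ ζ 1 = 0 ∧ deriv ζ (-1) = 0 ∧ deriv ζ 1 = 0 ∧
    (∀ x ∈ Ioo (-1 : ℝ) 1, 0 < ζ x) ∧
    (∫ x in (-1 : ℝ)..1, ζ x) = 1 ∧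
    ∀ x ∈ Ioo (-1 : ℝ) 1,
      β * iteratedDeriv 4 ζ x - τ * iteratedDeriv 2 ζ x = μ * ζ x

open Filter

theorem hasDerivAt_intervalIntegral_of_continuous_partialDeriv {F F' : ℝ → ℝ → ℝ} {a b : ℝ}
    (hF : ∀ t, Continuous (F t)) (hF' : Continuous fun p : ℝ × ℝ => F' p.1 p.2)
    (hderiv : ∀ t x, HasDerivAt (F · x) (F' t x) t) (t₀ : ℝ) :
    HasDerivAt (fun t => ∫ x in a..b, F t x) (∫ x in a..b, F' t₀ x) t₀ := by
  obtain ⟨C, hC⟩ := ((isCompact_closedBall t₀ 1).prod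
    (isCompact_uIcc (a := a) (b := b))).exists_bound_of_continuousOn hF'.continuousOn
  have hF'_t₀ : Continuous (F' t₀) := hF'.comp (continuous_const.prodMk continuous_id)
  refine (intervalIntegral.hasDerivAt_integral_of_dominated_loc_of_deriv_le
    (bound := fun _ => C) (Metric.ball_mem_nhds t₀ one_pos)
    (Eventually.of_forall fun t => (hF t).aestronglyMeasurable) ((hF t₀).intervalIntegrable _ _)
    hF'_t₀.aestronglyMeasurable ?_ intervalIntegrable_const
    (Eventually.of_forall fun x _ t _ => hderiv t x)).2
  exact Eventually.of_forall fun x hx t ht =>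
    hC (t, x) ⟨Metric.ball_subset_closedBall ht, uIoc_subset_uIcc hx⟩

theorem integral_mul_deriv_eq_neg_of_boundary {a b : ℝ} {f g : ℝ → ℝ}
    (hf : ContDiff ℝ 1 f) (hg : ContDiff ℝ 1 g) (ha : f a * g a = 0) (hb : f b * g b = 0) :
    ∫ x in a..b, f x * deriv g x = -∫ x in a..b, deriv f x * g x := by
  rw [intervalIntegral.integral_mul_deriv_eq_deriv_mul
    (fun x _ => (hf.differentiable one_ne_zero x).hasDerivAt)
    (fun x _ => (hg.differentiable one_ne_zero x).hasDerivAt)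
    ((hf.continuous_deriv le_rfl).intervalIntegrable _ _)
    ((hg.continuous_deriv le_rfl).intervalIntegrable _ _), ha, hb]
  ring

def IsClampedAt (a b : ℝ) (f : ℝ → ℝ) : Prop :=
  f a = 0 ∧ f b = 0 ∧ deriv f a = 0 ∧ deriv f b = 0

theorem integral_mul_iteratedDeriv_two_eq {a b : ℝ} {f g : ℝ → ℝ}
    (hf : ContDiff ℝ 2 f) (hg : ContDiff ℝ 2 g) (hfc : IsClampedAt a b f) :
    ∫ x in a..b, f x * iteratedDeriv 2 g x = ∫ x in a..b, iteratedDeriv 2 f x * g x := by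
  obtain ⟨hfa, hfb, hf'a, hf'b⟩ := hfc
  simp only [iteratedDeriv_eq_iterate, Function.iterate_succ, Function.iterate_zero,
    Function.comp_apply, id]
  rw [integral_mul_deriv_eq_neg_of_boundary (hf.of_le (by norm_num)) hg.deriv'
      (by simp [hfa]) (by simp [hfb]),
    integral_mul_deriv_eq_neg_of_boundary hf.deriv' (hg.of_le (by norm_num))
      (by simp [hf'a]) (by simp [hf'b]), neg_neg]

theorem integral_mul_iteratedDeriv_four_eq {a b : ℝ} {f g : ℝ → ℝ}
    (hf : ContDiff ℝ 4 f) (hg : ContDiff ℝ 4 g) (hfc : IsClampedAt a b f)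
    (hgc : IsClampedAt a b g) :
    ∫ x in a..b, f x * iteratedDeriv 4 g x = ∫ x in a..b, iteratedDeriv 4 f x * g x := by
  have four_eq (h : ℝ → ℝ) : iteratedDeriv 4 h = iteratedDeriv 2 (iteratedDeriv 2 h) := by
    simp only [iteratedDeriv_eq_iterate, ← Function.iterate_add_apply]
  have hf₂ : ContDiff ℝ 2 (iteratedDeriv 2 f) := by
    rw [iteratedDeriv_eq_iterate]; exact hf.iterate_deriv' 2 2
  have hg₂ : ContDiff ℝ 2 (iteratedDeriv 2 g) := by
    rw [iteratedDeriv_eq_iterate]; exact hg.iterate_deriv' 2 2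
  calc ∫ x in a..b, f x * iteratedDeriv 4 g x
      = ∫ x in a..b, iteratedDeriv 2 f x * iteratedDeriv 2 g x := by
        rw [four_eq, integral_mul_iteratedDeriv_two_eq (hf.of_le (by norm_num)) hg₂ hfc]
    _ = ∫ x in a..b, g x * iteratedDeriv 4 f x := by
        rw [four_eq, integral_mul_iteratedDeriv_two_eq (hg.of_le (by norm_num)) hf₂ hgc]
        simp only [mul_comm]
    _ = ∫ x in a..b, iteratedDeriv 4 f x * g x := by simp only [mul_comm]

theorem le_mul_exp_of_hasDerivAt_le_mul {f f' : ℝ → ℝ} {c a b : ℝ} (hab : a ≤ b)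
    (hf : ∀ s ∈ Icc a b, HasDerivAt f (f' s) s) (hf' : ∀ s ∈ Ico a b, f' s ≤ c * f s) :
    f b ≤ f a * Real.exp (c * (b - a)) := by
  have := le_gronwallBound_of_liminf_deriv_right_le (f' := f') (K := c) (ε := 0)
    (fun s hs => (hf s hs).continuousAt.continuousWithinAt)
    (fun s hs _ hr => (hf s (Ico_subset_Icc_self hs)).hasDerivWithinAt.liminf_right_slope_le hr)
    le_rfl (by simpa using hf') b ⟨hab, le_rfl⟩
  rwa [gronwallBound_ε0] at this

theorem integral_mul_abs_le_of_neg_one_le {a b : ℝ} (hab : a ≤ b) {w v : ℝ → ℝ}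
    (hw : Continuous w) (hv : Continuous v) (hw₀ : ∀ x ∈ Ioo a b, 0 ≤ w x)
    (hv₁ : ∀ x ∈ Ioo a b, -1 ≤ v x) :
    ∫ x in a..b, w x * |v x| ≤ (∫ x in a..b, w x * v x) + 2 * ∫ x in a..b, w x := by
  rw [← intervalIntegral.integral_const_mul,
    ← intervalIntegral.integral_add (f := fun x => w x * v x) (g := fun x => 2 * w x)
    ((hw.mul hv).intervalIntegrable _ _)
    ((continuous_const.mul hw).intervalIntegrable _ _)]
  refine intervalIntegral.integral_mono_on_of_le_Ioo hab ((hw.mul hv.abs).intervalIntegrable _ _)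
    (((hw.mul hv).add (continuous_const.mul hw)).intervalIntegrable _ _) fun x hx => ?_
  have habs : |v x| ≤ v x + 2 := abs_le.mpr ⟨by linarith [hv₁ x hx], by linarith [hv₁ x hx]⟩
  nlinarith [hw₀ x hx]

theorem integral_mul_clampedOperator_comm {a b : ℝ} (β τ : ℝ) {f g : ℝ → ℝ}
    (hf : ContDiff ℝ 4 f) (hg : ContDiff ℝ 4 g) (hfc : IsClampedAt a b f)
    (hgc : IsClampedAt a b g) :
    ∫ x in a..b, f x * (β * iteratedDeriv 4 g x - τ * iteratedDeriv 2 g x) =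
      ∫ x in a..b, (β * iteratedDeriv 4 f x - τ * iteratedDeriv 2 f x) * g x := by
  have hint {p q : ℝ → ℝ} (hp : Continuous p) (hq : Continuous q) (c : ℝ) :
      IntervalIntegrable (fun x => c * (p x * q x)) volume a b :=
    (continuous_const.mul (hp.mul hq)).intervalIntegrable _ _
  have hf₄ := hf.continuous_iteratedDeriv 4 le_rfl
  have hf₂ := hf.continuous_iteratedDeriv 2 (by norm_num)
  have hg₄ := hg.continuous_iteratedDeriv 4 le_rfl
  have hg₂ := hg.continuous_iteratedDeriv 2 (by norm_num)
  simp only [mul_sub, sub_mul, mul_left_comm (f _), mul_assoc]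
  rw [intervalIntegral.integral_sub (hint hf.continuous hg₄ β) (hint hf.continuous hg₂ τ),
    intervalIntegral.integral_sub (hint hf₄ hg.continuous β) (hint hf₂ hg.continuous τ)]
  simp only [intervalIntegral.integral_const_mul,
    integral_mul_iteratedDeriv_four_eq hf hg hfc hgc,
    integral_mul_iteratedDeriv_two_eq (hf.of_le (by norm_num)) (hg.of_le (by norm_num)) hfc]

namespace IsPrincipalEigenpair

variable {β τ μ : ℝ} {ζ : ℝ → ℝ}

theorem integral_mul_clampedOperator_eq (h : IsPrincipalEigenpair β τ ζ μ) {v : ℝ → ℝ}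
    (hv : ContDiff ℝ 4 v) (hvc : IsClampedAt (-1) 1 v) :
    ∫ x in (-1 : ℝ)..1, ζ x * (β * iteratedDeriv 4 v x - τ * iteratedDeriv 2 v x) =
      μ * ∫ x in (-1 : ℝ)..1, ζ x * v x := by
  obtain ⟨-, hζ, hζ₁, hζ₂, hζ₃, hζ₄, -, -, heq⟩ := h
  rw [integral_mul_clampedOperator_comm β τ hζ hv ⟨hζ₁, hζ₂, hζ₃, hζ₄⟩ hvc,
    ← intervalIntegral.integral_const_mul]
  refine intervalIntegral.integral_congr_Ioo_of_le (by norm_num) fun x hx => ?_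
  simp only [heq x hx, mul_assoc]

theorem integral_mul_le_neg_mul_integral (h : IsPrincipalEigenpair β τ ζ μ) {v w : ℝ → ℝ}
    (hv : ContDiff ℝ 4 v) (hvc : IsClampedAt (-1) 1 v) (hw : Continuous w)
    (hwv : ∀ x ∈ Ioo (-1 : ℝ) 1, w x + β * iteratedDeriv 4 v x - τ * iteratedDeriv 2 v x ≤ 0) :
    ∫ x in (-1 : ℝ)..1, ζ x * w x ≤ -μ * ∫ x in (-1 : ℝ)..1, ζ x * v x := by
  have hζv := h.integral_mul_clampedOperator_eq hv hvc
  obtain ⟨-, hζ, -, -, -, -, hζ_pos, -, -⟩ := h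
  have hv₄ := hv.continuous_iteratedDeriv 4 le_rfl
  have hv₂ := hv.continuous_iteratedDeriv 2 (by norm_num)
  calc ∫ x in (-1 : ℝ)..1, ζ x * w x
      ≤ ∫ x in (-1 : ℝ)..1, -(ζ x * (β * iteratedDeriv 4 v x - τ * iteratedDeriv 2 v x)) := by
        refine intervalIntegral.integral_mono_on_of_le_Ioo (by norm_num)
          ((hζ.continuous.mul hw).intervalIntegrable _ _)
          ((hζ.continuous.mul ((continuous_const.mul hv₄).sub
            (continuous_const.mul hv₂))).neg.intervalIntegrable _ _) fun x hx => ?_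
        nlinarith [(hζ_pos x hx).le, hwv x hx]
    _ = -μ * ∫ x in (-1 : ℝ)..1, ζ x * v x := by
        rw [intervalIntegral.integral_neg, hζv, neg_mul]

end IsPrincipalEigenpair

theorem stmt_2_general
    (β τ lam : ℝ) (hlam : 0 < lam)
    (ζ₁ : ℝ → ℝ) (μ₁ : ℝ) (heig : IsPrincipalEigenpair β τ ζ₁ μ₁)
    (T : ℝ≥0∞)
    (u G : ℝ → ℝ → ℝ)
    -- existence of ∂t u and of ∂x^k u, k ≤ 4
    (hu_t : ∀ x : ℝ, Differentiable ℝ fun s => u s x)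
    (hu_x : ∀ t : ℝ, ContDiff ℝ 4 (u t))
    -- joint continuity of ∂t u and of ∂x^k u, k ≤ 4
    (hu_t_cont : Continuous fun p : ℝ × ℝ => deriv (fun s => u s p.2) p.1)
    -- clamped boundary conditions
    (hbc : ∀ t : ℝ, 0 ≤ t → ENNReal.ofReal t < T →
      u t (-1) = 0 ∧ u t 1 = 0 ∧ deriv (u t) (-1) = 0 ∧ deriv (u t) 1 = 0)
    -- u stays above -1
    (hu_gt : ∀ t : ℝ, 0 ≤ t → ENNReal.ofReal t < T → ∀ x ∈ Icc (-1 : ℝ) 1, -1 < u t x)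
    -- G continuous and nonnegative
    (hG_nonneg : ∀ t : ℝ, 0 ≤ t → ENNReal.ofReal t < T → ∀ x ∈ Ioo (-1 : ℝ) 1, 0 ≤ G t x)
    -- the evolution equation ∂t u + β ∂x⁴ u - τ ∂x² u = -λ G
    (hpde : ∀ t : ℝ, 0 ≤ t → ENNReal.ofReal t < T → ∀ x ∈ Ioo (-1 : ℝ) 1,
      deriv (fun s => u s x) t + β * iteratedDeriv 4 (u t) x
        - τ * iteratedDeriv 2 (u t) x = - lam * G t x) :
    ∀ t : ℝ, 0 ≤ t → ENNReal.ofReal t < T →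
      (∫ x in (-1 : ℝ)..1, ζ₁ x * |u t x|) ≤ 2 + (∫ x in (-1 : ℝ)..1, ζ₁ x * u t x) ∧
      2 + (∫ x in (-1 : ℝ)..1, ζ₁ x * u t x) ≤
        2 + (∫ x in (-1 : ℝ)..1, ζ₁ x * u 0 x) * Real.exp (-μ₁ * t) := by
  intro t ht htT
  have hdecay : ∀ s ∈ Ico 0 t, ∫ x in (-1 : ℝ)..1, ζ₁ x * deriv (fun r => u r x) s ≤
      -μ₁ * ∫ x in (-1 : ℝ)..1, ζ₁ x * u s x := fun s hs => by
    have hsT : ENNReal.ofReal s < T := (ENNReal.ofReal_le_ofReal hs.2.le).trans_lt htT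
    refine heig.integral_mul_le_neg_mul_integral (hu_x s) (hbc s hs.1 hsT)
      (hu_t_cont.comp (continuous_const.prodMk continuous_id)) fun x hx => ?_
    rw [hpde s hs.1 hsT x hx]
    nlinarith [hG_nonneg s hs.1 hsT x hx]
  obtain ⟨-, hζ, -, -, -, -, hζ_pos, hζ_int, -⟩ := heig
  have hE : ∀ s, HasDerivAt (fun s => ∫ x in (-1 : ℝ)..1, ζ₁ x * u s x)
      (∫ x in (-1 : ℝ)..1, ζ₁ x * deriv (fun r => u r x) s) s :=
    hasDerivAt_intervalIntegral_of_continuous_partialDeriv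
      (fun s => hζ.continuous.mul (hu_x s).continuous)
      ((hζ.continuous.comp continuous_snd).mul hu_t_cont)
      fun s x => (hu_t x s).hasDerivAt.const_mul (ζ₁ x)
  refine ⟨?_, ?_⟩
  · have habs := integral_mul_abs_le_of_neg_one_le (by norm_num) hζ.continuous (hu_x t).continuous
      (fun x hx => (hζ_pos x hx).le) fun x hx => (hu_gt t ht htT x (Ioo_subset_Icc_self hx)).le
    rw [hζ_int] at habs
    linarith
  · have hgronwall := le_mul_exp_of_hasDerivAt_le_mul ht (fun s _ => hE s) hdecay
    rw [sub_zero] at hgronwall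
    linarith

/-- Weighted L¹ bound for the parabolic (γ = 0) clamped problem with
nonpositive right-hand side `-λ G`. -/
theorem stmt_2
    (β τ lam : ℝ) (hβ : 0 < β) (hτ : 0 ≤ τ) (hlam : 0 < lam)
    (ζ₁ : ℝ → ℝ) (μ₁ : ℝ) (heig : IsPrincipalEigenpair β τ ζ₁ μ₁)
    (T : ℝ≥0∞) (hT : 0 < T)
    (u G : ℝ → ℝ → ℝ)
    -- existence of ∂t u and of ∂x^k u, k ≤ 4
    (hu_t : ∀ x : ℝ, Differentiable ℝ fun s => u s x)
    (hu_x : ∀ t : ℝ, ContDiff ℝ 4 (u t))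
    -- joint continuity of ∂t u and of ∂x^k u, k ≤ 4
    (hu_t_cont : Continuous fun p : ℝ × ℝ => deriv (fun s => u s p.2) p.1)
    (hu_x_cont : ∀ k ≤ 4, Continuous fun p : ℝ × ℝ => iteratedDeriv k (u p.1) p.2)
    -- clamped boundary conditions
    (hbc : ∀ t : ℝ, 0 ≤ t → ENNReal.ofReal t < T →
      u t (-1) = 0 ∧ u t 1 = 0 ∧ deriv (u t) (-1) = 0 ∧ deriv (u t) 1 = 0)
    -- u stays above -1
    (hu_gt : ∀ t : ℝ, 0 ≤ t → ENNReal.ofReal t < T → ∀ x ∈ Icc (-1 : ℝ) 1, -1 < u t x)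
    -- G continuous and nonnegative
    (hG_cont : Continuous fun p : ℝ × ℝ => G p.1 p.2)
    (hG_nonneg : ∀ t : ℝ, 0 ≤ t → ENNReal.ofReal t < T → ∀ x ∈ Ioo (-1 : ℝ) 1, 0 ≤ G t x)
    -- the evolution equation ∂t u + β ∂x⁴ u - τ ∂x² u = -λ G
    (hpde : ∀ t : ℝ, 0 ≤ t → ENNReal.ofReal t < T → ∀ x ∈ Ioo (-1 : ℝ) 1,
      deriv (fun s => u s x) t + β * iteratedDeriv 4 (u t) x
        - τ * iteratedDeriv 2 (u t) x = - lam * G t x) :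
    ∀ t : ℝ, 0 ≤ t → ENNReal.ofReal t < T →
      (∫ x in (-1 : ℝ)..1, ζ₁ x * |u t x|) ≤ 2 + (∫ x in (-1 : ℝ)..1, ζ₁ x * u t x) ∧
      2 + (∫ x in (-1 : ℝ)..1, ζ₁ x * u t x) ≤
        2 + (∫ x in (-1 : ℝ)..1, ζ₁ x * u 0 x) * Real.exp (-μ₁ * t) :=
  stmt_2_general β τ lam hlam ζ₁ μ₁ heig T u G hu_t hu_x hu_t_cont hbc hu_gt hG_nonneg hpde
end

section
/- Let u : [-1,1] → ℝ be continuous with u > -1 on (-1,1) and u(±1) = 0, and let w : [-1,1] → ℝ be continuous and nonnegative. Let ψ be continuous on the closure of Ω(u), continuously differentiable in Ω(u) with ∂zψ extending continuously to the closure, and suppose ψ(x,-1) = 0 and ψ(x,u(x)) = 1 for all x ∈ (-1,1). Then ∫_{-1}^{1} w(x)/(1+u(x)) dx ≤ ∫_{Ω(u)} w(x) |∂z ψ(x,z)|² d(x,z) (an inequality in [0,∞]). -/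
/-!
On each vertical segment `{x} × [-1, u x]` the function `ψ` rises from `0` to `1`, so the
fundamental theorem of calculus and Cauchy–Schwarz give `1 ≤ (1 + u x) ∫ (∂_z ψ)² dz`.
Multiplying by `w x ≥ 0` and integrating in `x` gives the claim, the iterated integral being
the integral over `Ω(u)` by Tonelli.
-/

open MeasureTheory Set
open scoped ENNReal

/-- The domain `Ω(u) = {(x,z) : -1 < x < 1, -1 < z < u(x)}`. -/
def Omega (u : ℝ → ℝ) : Set (ℝ × ℝ) :=
  {p | p.1 ∈ Ioo (-1 : ℝ) 1 ∧ p.2 ∈ Ioo (-1 : ℝ) (u p.1)}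

/-- Partial derivative with respect to the second variable. -/
noncomputable def pdz (ψ : ℝ × ℝ → ℝ) (p : ℝ × ℝ) : ℝ :=
  deriv (fun z => ψ (p.1, z)) p.2

theorem sq_intervalIntegral_le_mul_integral_sq {f : ℝ → ℝ} {a b : ℝ} (hab : a < b)
    (hf : IntervalIntegrable f volume a b)
    (hf2 : IntervalIntegrable (fun z => f z ^ 2) volume a b) :
    (∫ z in a..b, f z) ^ 2 ≤ (b - a) * ∫ z in a..b, f z ^ 2 := by
  set I := ∫ z in a..b, f z
  -- `c` is the mean of `f`; expand `0 ≤ ∫ (f - c)²`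
  set c := I / (b - a)
  have hexpand : ∫ z in a..b, (f z - c) ^ 2 =
      (∫ z in a..b, f z ^ 2) - 2 * c * I + c ^ 2 * (b - a) := by
    have hsq : (fun z => (f z - c) ^ 2) = fun z => f z ^ 2 - 2 * c * f z + c ^ 2 := by
      ext z; ring
    rw [hsq,
      intervalIntegral.integral_add (hf2.sub (hf.const_mul _)) intervalIntegrable_const,
      intervalIntegral.integral_sub hf2 (hf.const_mul _), intervalIntegral.integral_const_mul,
      intervalIntegral.integral_const, smul_eq_mul]
    ring
  have hnonneg : 0 ≤ ∫ z in a..b, (f z - c) ^ 2 :=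
    intervalIntegral.integral_nonneg hab.le fun z _ => sq_nonneg _
  have hcI : c * (b - a) = I := div_mul_cancel₀ _ (sub_pos.2 hab).ne'
  nlinarith

theorem sq_sub_div_le_intervalIntegral_sq_deriv {g g' : ℝ → ℝ} {a b : ℝ} (hab : a < b)
    (hg : ContinuousOn g (Icc a b)) (hderiv : ∀ z ∈ Ioo a b, HasDerivAt g (g' z) z)
    (hg' : ContinuousOn g' (Icc a b)) :
    (g b - g a) ^ 2 / (b - a) ≤ ∫ z in a..b, g' z ^ 2 := by
  have hIcc : uIcc a b = Icc a b := uIcc_of_le hab.le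
  have hint : IntervalIntegrable g' volume a b := (hIcc ▸ hg').intervalIntegrable
  have hint2 : IntervalIntegrable (fun z => g' z ^ 2) volume a b :=
    (hIcc ▸ hg'.pow 2).intervalIntegrable
  rw [div_le_iff₀' (sub_pos.2 hab),
    ← intervalIntegral.integral_eq_sub_of_hasDerivAt_of_le hab.le hg hderiv hint]
  exact sq_intervalIntegral_le_mul_integral_sq hab hint hint2

theorem hasDerivAt_pdz {ψ : ℝ × ℝ → ℝ} {x z : ℝ}
    (hψ : DifferentiableAt ℝ ψ (x, z)) :
    HasDerivAt (fun t => ψ (x, t)) (pdz ψ (x, z)) z :=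
  (hψ.comp z ((differentiableAt_const x).prodMk differentiableAt_id)).hasDerivAt

theorem mk_mem_Omega {u : ℝ → ℝ} {x z : ℝ} :
    (x, z) ∈ Omega u ↔ x ∈ Ioo (-1 : ℝ) 1 ∧ z ∈ Ioo (-1 : ℝ) (u x) :=
  Iff.rfl

theorem isOpen_Omega {u : ℝ → ℝ} (hu : ContinuousOn u (Icc (-1 : ℝ) 1)) :
    IsOpen (Omega u) := by
  rw [isOpen_iff_mem_nhds]
  rintro ⟨x, z⟩ ⟨hx, hz⟩
  have hux : ContinuousAt (fun p : ℝ × ℝ => u p.1) (x, z) :=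
    (hu.continuousAt (Icc_mem_nhds hx.1 hx.2)).comp continuousAt_fst
  filter_upwards [(isOpen_Ioo.preimage continuous_fst).mem_nhds hx,
    continuousAt_const.eventually_lt continuousAt_snd hz.1,
    continuousAt_snd.eventually_lt hux hz.2] with p hp1 hp2 hp3
  exact ⟨hp1, hp2, hp3⟩

theorem mk_mem_closure_Omega {u : ℝ → ℝ} {x z : ℝ} (hx : x ∈ Ioo (-1 : ℝ) 1)
    (hux : -1 < u x) (hz : z ∈ Icc (-1 : ℝ) (u x)) : (x, z) ∈ closure (Omega u) :=
  map_mem_closure (Continuous.prodMk_right x) (by rwa [closure_Ioo hux.ne])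
    fun _ ht => ⟨hx, ht⟩

theorem setLIntegral_Omega {u : ℝ → ℝ} (hu : ContinuousOn u (Icc (-1 : ℝ) 1))
    {F : ℝ × ℝ → ℝ≥0∞} (hF : AEMeasurable F (volume.restrict (Omega u))) :
    ∫⁻ p in Omega u, F p =
      ∫⁻ x in Ioo (-1 : ℝ) 1, ∫⁻ z in Ioo (-1 : ℝ) (u x), F (x, z) := by
  classical
  have hΩ : MeasurableSet (Omega u) := (isOpen_Omega hu).measurableSet
  rw [← lintegral_indicator hΩ, Measure.volume_eq_prod,
    lintegral_prod _ ((aemeasurable_indicator_iff hΩ).2 hF),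
    ← lintegral_indicator measurableSet_Ioo]
  congr 1 with x
  by_cases hx : x ∈ Ioo (-1 : ℝ) 1
  · rw [indicator_of_mem hx, ← lintegral_indicator measurableSet_Ioo]
    congr 1 with z
    simp only [indicator_apply, mk_mem_Omega, hx, true_and]
  · simp only [indicator_apply, mk_mem_Omega, hx, false_and, if_false, lintegral_zero]

theorem ofReal_div_le_setLIntegral_sq_pdz {u w : ℝ → ℝ} {ψ : ℝ × ℝ → ℝ}
    (hu : ContinuousOn u (Icc (-1 : ℝ) 1)) (hψ_cont : ContinuousOn ψ (closure (Omega u)))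
    (hψ_smooth : ContDiffOn ℝ 1 ψ (Omega u))
    (hψ_dz : ContinuousOn (pdz ψ) (closure (Omega u)))
    {x : ℝ} (hx : x ∈ Ioo (-1 : ℝ) 1) (hux : -1 < u x) (hw : 0 ≤ w x)
    (hbot : ψ (x, -1) = 0) (htop : ψ (x, u x) = 1) :
    ENNReal.ofReal (w x / (1 + u x)) ≤
      ∫⁻ z in Ioo (-1 : ℝ) (u x), ENNReal.ofReal (w x * pdz ψ (x, z) ^ 2) := by
  have hsegment : MapsTo (fun z => (x, z)) (Icc (-1 : ℝ) (u x)) (closure (Omega u)) :=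
    fun _ hz => mk_mem_closure_Omega hx hux hz
  have hg : ContinuousOn (fun z => ψ (x, z)) (Icc (-1 : ℝ) (u x)) :=
    hψ_cont.comp (Continuous.prodMk_right x).continuousOn hsegment
  have hg' : ContinuousOn (fun z => pdz ψ (x, z)) (Icc (-1 : ℝ) (u x)) :=
    hψ_dz.comp (Continuous.prodMk_right x).continuousOn hsegment
  have hderiv (z : ℝ) (hz : z ∈ Ioo (-1 : ℝ) (u x)) :
      HasDerivAt (fun t => ψ (x, t)) (pdz ψ (x, z)) z :=
    hasDerivAt_pdz <|
      (hψ_smooth.contDiffAt ((isOpen_Omega hu).mem_nhds ⟨hx, hz⟩)).differentiableAt one_ne_zero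
  have hbound := sq_sub_div_le_intervalIntegral_sq_deriv hux hg hderiv hg'
  rw [htop, hbot] at hbound
  have hint : IntegrableOn (fun z => w x * pdz ψ (x, z) ^ 2) (Ioo (-1 : ℝ) (u x)) :=
    (continuousOn_const.mul (hg'.pow 2)).integrableOn_Icc.mono_set Ioo_subset_Icc_self
  rw [← ofReal_integral_eq_lintegral_ofReal hint (ae_of_all _ fun z => by positivity),
    ← integral_Ioc_eq_integral_Ioo, ← intervalIntegral.integral_of_le hux.le,
    intervalIntegral.integral_const_mul]
  refine ENNReal.ofReal_le_ofReal ?_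
  calc w x / (1 + u x) = w x * ((1 - 0) ^ 2 / (u x - -1)) := by ring
    _ ≤ w x * ∫ z in (-1 : ℝ)..u x, pdz ψ (x, z) ^ 2 := mul_le_mul_of_nonneg_left hbound hw

theorem stmt_7_general
    (u : ℝ → ℝ)
    (hu_cont : ContinuousOn u (Icc (-1 : ℝ) 1))
    (hu_gt : ∀ x ∈ Ioo (-1 : ℝ) 1, -1 < u x)
    (w : ℝ → ℝ)
    (hw_cont : ContinuousOn w (Icc (-1 : ℝ) 1))
    (hw_nonneg : ∀ x ∈ Icc (-1 : ℝ) 1, 0 ≤ w x)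
    (ψ : ℝ × ℝ → ℝ)
    (hψ_cont : ContinuousOn ψ (closure (Omega u)))
    (hψ_smooth : ContDiffOn ℝ 1 ψ (Omega u))
    (hψ_dz : ContinuousOn (pdz ψ) (closure (Omega u)))
    (hbot : ∀ x ∈ Ioo (-1 : ℝ) 1, ψ (x, -1) = 0)
    (htop : ∀ x ∈ Ioo (-1 : ℝ) 1, ψ (x, u x) = 1) :
    (∫⁻ x in Ioo (-1 : ℝ) 1, ENNReal.ofReal (w x / (1 + u x))) ≤
      ∫⁻ p in Omega u, ENNReal.ofReal (w p.1 * (pdz ψ p) ^ 2) := by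
  have hw_Omega : ContinuousOn (fun p : ℝ × ℝ => w p.1) (Omega u) :=
    hw_cont.comp continuousOn_fst fun _ hp => Ioo_subset_Icc_self hp.1
  have hF : AEMeasurable (fun p => ENNReal.ofReal (w p.1 * pdz ψ p ^ 2))
      (volume.restrict (Omega u)) :=
    (ENNReal.continuous_ofReal.comp_continuousOn
      (hw_Omega.mul ((hψ_dz.mono subset_closure).pow 2))).aemeasurable
      (isOpen_Omega hu_cont).measurableSet
  rw [setLIntegral_Omega hu_cont hF]
  exact setLIntegral_mono' measurableSet_Ioo fun x hx =>
    ofReal_div_le_setLIntegral_sq_pdz hu_cont hψ_cont hψ_smooth hψ_dz hx (hu_gt x hx)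
      (hw_nonneg x (Ioo_subset_Icc_self hx)) (hbot x hx) (htop x hx)

/-- Weighted lower bound for the vertical Dirichlet integral of `ψ`,
as an inequality in `[0,∞]`. -/
theorem stmt_7
    (u : ℝ → ℝ)
    (hu_cont : ContinuousOn u (Icc (-1 : ℝ) 1))
    (hu_gt : ∀ x ∈ Ioo (-1 : ℝ) 1, -1 < u x)
    (hu_bc : u (-1) = 0 ∧ u 1 = 0)
    (w : ℝ → ℝ)
    (hw_cont : ContinuousOn w (Icc (-1 : ℝ) 1))
    (hw_nonneg : ∀ x ∈ Icc (-1 : ℝ) 1, 0 ≤ w x)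
    (ψ : ℝ × ℝ → ℝ)
    (hψ_cont : ContinuousOn ψ (closure (Omega u)))
    (hψ_smooth : ContDiffOn ℝ 1 ψ (Omega u))
    (hψ_dz : ContinuousOn (pdz ψ) (closure (Omega u)))
    (hbot : ∀ x ∈ Ioo (-1 : ℝ) 1, ψ (x, -1) = 0)
    (htop : ∀ x ∈ Ioo (-1 : ℝ) 1, ψ (x, u x) = 1) :
    (∫⁻ x in Ioo (-1 : ℝ) 1, ENNReal.ofReal (w x / (1 + u x))) ≤
      ∫⁻ p in Omega u, ENNReal.ofReal (w p.1 * (pdz ψ p) ^ 2) :=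
  stmt_7_general u hu_cont hu_gt w hw_cont hw_nonneg ψ hψ_cont hψ_smooth hψ_dz hbot htop
end

section
/- Let β > 0, τ ≥ 0, and λ, α, μ₁ ∈ ℝ. Let u : [-1,1] → ℝ be four times continuously differentiable with u(±1) = u'(±1) = 0, let G : [-1,1] → ℝ be continuous with β u'''' − τ u'' = −λ G on (-1,1), let ζ : [-1,1] → ℝ be four times continuously differentiable with ζ(±1) = ζ'(±1) = 0 and β ζ'''' − τ ζ'' = μ₁ ζ on (-1,1), and let U : [-1,1] → ℝ be twice continuously differentiable with −U'' = u on (-1,1) and U(±1) = 0. Then λ ∫_{-1}^{1} (1 + αU) ζ G dx = − μ₁ ∫_{-1}^{1} (1 + αU) ζ u dx − αβ ∫_{-1}^{1} ζ (u')² dx − α ∫_{-1}^{1} (4β ζ''' − 2τ ζ') u U' dx − α ∫_{-1}^{1} ( τ ζ − (9β/2) ζ'' ) u² dx. -/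
/-! Multiply `β u'''' - τ u'' = -λ G` by `(1 + α U) ζ` and subtract `(1 + α U) u` times the
eigenvalue equation for `ζ`. Using `U'' = -u`, what remains after moving the claimed right-hand
side over is the exact derivative of an explicit flux built from `u`, `ζ`, `U` and their
derivatives. Every term of that flux carries a factor `u`, `u'`, `ζ` or `ζ'`, so it vanishes at
the clamped endpoints `±1`, and the fundamental theorem of calculus gives the identity. -/

open Set intervalIntegral

theorem ContDiff.hasDerivAt_iteratedDeriv {𝕜 F : Type*} [NontriviallyNormedField 𝕜]
    [NormedAddCommGroup F] [NormedSpace 𝕜 F] {f : 𝕜 → F} {n : WithTop ℕ∞} {m : ℕ}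
    (hf : ContDiff 𝕜 n f) (hm : (m : WithTop ℕ∞) < n) (x : 𝕜) :
    HasDerivAt (iteratedDeriv m f) (iteratedDeriv (m + 1) f x) x := by
  rw [iteratedDeriv_succ]
  exact (hf.differentiable_iteratedDeriv m hm x).hasDerivAt

section Flux

variable (β τ α : ℝ) (u ζ U : ℝ → ℝ)

/- The first product is the Lagrange concomitant of `∂⁴` for the pair `(u, ζ)`; the `α`-terms
absorb what the derivative of the weight `1 + α U` produces. -/
noncomputable def fourthOrderFlux (x : ℝ) : ℝ :=
  (1 + α * U x) * (ζ x * iteratedDeriv 3 u x - deriv ζ x * iteratedDeriv 2 u x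
      + iteratedDeriv 2 ζ x * deriv u x - iteratedDeriv 3 ζ x * u x)
    + α * (-(deriv U x * ζ x * iteratedDeriv 2 u x) + 2 * (deriv U x * deriv ζ x * deriv u x)
      - 3 * (deriv U x * iteratedDeriv 2 ζ x * u x) - ζ x * u x * deriv u x
      + 3 / 2 * (deriv ζ x * u x ^ 2))

noncomputable def secondOrderFlux (x : ℝ) : ℝ :=
  -((1 + α * U x) * (ζ x * deriv u x - u x * deriv ζ x)) + α * (deriv U x * ζ x * u x)

noncomputable def flux (x : ℝ) : ℝ :=
  β * fourthOrderFlux α u ζ U x + τ * secondOrderFlux α u ζ U x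

variable {β τ α u ζ U} {x : ℝ}

theorem hasDerivAt_fourthOrderFlux (hu : ContDiff ℝ 4 u) (hζ : ContDiff ℝ 4 ζ)
    (hU : DifferentiableAt ℝ U x) (hU' : HasDerivAt (deriv U) (-u x) x) :
    HasDerivAt (fourthOrderFlux α u ζ U)
      ((1 + α * U x) * (ζ x * iteratedDeriv 4 u x - u x * iteratedDeriv 4 ζ x)
        - α * (ζ x * deriv u x ^ 2) - α * (4 * iteratedDeriv 3 ζ x * u x * deriv U x)
        + α * (9 / 2 * iteratedDeriv 2 ζ x * u x ^ 2)) x := by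
  have hu₀ : HasDerivAt u (deriv u x) x := (hu.differentiable (by norm_num) x).hasDerivAt
  have hu₁ : HasDerivAt (deriv u) (iteratedDeriv 2 u x) x := by
    simpa using hu.hasDerivAt_iteratedDeriv (m := 1) (by norm_num) x
  have hu₂ := hu.hasDerivAt_iteratedDeriv (m := 2) (by norm_num) x
  have hu₃ := hu.hasDerivAt_iteratedDeriv (m := 3) (by norm_num) x
  have hζ₀ : HasDerivAt ζ (deriv ζ x) x := (hζ.differentiable (by norm_num) x).hasDerivAt
  have hζ₁ : HasDerivAt (deriv ζ) (iteratedDeriv 2 ζ x) x := by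
    simpa using hζ.hasDerivAt_iteratedDeriv (m := 1) (by norm_num) x
  have hζ₂ := hζ.hasDerivAt_iteratedDeriv (m := 2) (by norm_num) x
  have hζ₃ := hζ.hasDerivAt_iteratedDeriv (m := 3) (by norm_num) x
  have hw : HasDerivAt (fun y => 1 + α * U y) (α * deriv U x) x :=
    (hU.hasDerivAt.const_mul α).const_add 1
  have hS := (((hζ₀.mul hu₃).sub (hζ₁.mul hu₂)).add (hζ₂.mul hu₁)).sub (hζ₃.mul hu₀)
  have hT := (((((hU'.mul hζ₀).mul hu₂).neg.add (((hU'.mul hζ₁).mul hu₁).const_mul 2)).sub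
    (((hU'.mul hζ₂).mul hu₀).const_mul 3)).sub ((hζ₀.mul hu₀).mul hu₁)).add
    ((hζ₁.mul (hu₀.pow 2)).const_mul (3 / 2))
  refine ((hw.mul hS).add (hT.const_mul α)).congr_deriv ?_
  simp only [Pi.mul_apply, Pi.sub_apply, Pi.add_apply, Pi.pow_apply, Nat.cast_ofNat]
  ring

theorem hasDerivAt_secondOrderFlux (hu : ContDiff ℝ 2 u) (hζ : ContDiff ℝ 2 ζ)
    (hU : DifferentiableAt ℝ U x) (hU' : HasDerivAt (deriv U) (-u x) x) :
    HasDerivAt (secondOrderFlux α u ζ U)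
      (-((1 + α * U x) * (ζ x * iteratedDeriv 2 u x - u x * iteratedDeriv 2 ζ x))
        + α * (2 * deriv ζ x * u x * deriv U x) - α * (ζ x * u x ^ 2)) x := by
  have hu₀ : HasDerivAt u (deriv u x) x := (hu.differentiable (by norm_num) x).hasDerivAt
  have hu₁ : HasDerivAt (deriv u) (iteratedDeriv 2 u x) x := by
    simpa using hu.hasDerivAt_iteratedDeriv (m := 1) (by norm_num) x
  have hζ₀ : HasDerivAt ζ (deriv ζ x) x := (hζ.differentiable (by norm_num) x).hasDerivAt
  have hζ₁ : HasDerivAt (deriv ζ) (iteratedDeriv 2 ζ x) x := by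
    simpa using hζ.hasDerivAt_iteratedDeriv (m := 1) (by norm_num) x
  have hw : HasDerivAt (fun y => 1 + α * U y) (α * deriv U x) x :=
    (hU.hasDerivAt.const_mul α).const_add 1
  refine ((hw.mul ((hζ₀.mul hu₁).sub (hu₀.mul hζ₁))).neg.add
    (((hU'.mul hζ₀).mul hu₀).const_mul α)).congr_deriv ?_
  simp only [Pi.mul_apply, Pi.sub_apply]
  ring

theorem flux_eq_zero (hu : u x = 0) (hu' : deriv u x = 0) (hζ : ζ x = 0)
    (hζ' : deriv ζ x = 0) : flux β τ α u ζ U x = 0 := by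
  simp [flux, fourthOrderFlux, secondOrderFlux, hu, hu', hζ, hζ']

theorem continuous_flux (hu : ContDiff ℝ 3 u) (hζ : ContDiff ℝ 3 ζ)
    (hU : ContDiff ℝ 1 U) : Continuous (flux β τ α u ζ U) := by
  have := hu.continuous_iteratedDeriv 2 (by norm_num)
  have := hu.continuous_iteratedDeriv 3 (by norm_num)
  have := hζ.continuous_iteratedDeriv 2 (by norm_num)
  have := hζ.continuous_iteratedDeriv 3 (by norm_num)
  have := hu.continuous_deriv (by norm_num)
  have := hζ.continuous_deriv (by norm_num)
  have := hU.continuous_deriv le_rfl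
  have := hu.continuous
  have := hζ.continuous
  have := hU.continuous
  unfold flux fourthOrderFlux secondOrderFlux
  fun_prop

theorem hasDerivAt_flux (hu : ContDiff ℝ 4 u) (hζ : ContDiff ℝ 4 ζ)
    (hU : DifferentiableAt ℝ U x) (hU' : HasDerivAt (deriv U) (-u x) x) :
    HasDerivAt (flux β τ α u ζ U)
      ((1 + α * U x) * ζ x * (β * iteratedDeriv 4 u x - τ * iteratedDeriv 2 u x)
        - (1 + α * U x) * u x * (β * iteratedDeriv 4 ζ x - τ * iteratedDeriv 2 ζ x)
        - α * β * (ζ x * deriv u x ^ 2)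
        - α * ((4 * β * iteratedDeriv 3 ζ x - 2 * τ * deriv ζ x) * u x * deriv U x)
        - α * ((τ * ζ x - 9 * β / 2 * iteratedDeriv 2 ζ x) * u x ^ 2)) x :=
  (((hasDerivAt_fourthOrderFlux hu hζ hU hU').const_mul β).add
    ((hasDerivAt_secondOrderFlux (hu.of_le (by norm_num)) (hζ.of_le (by norm_num))
      hU hU').const_mul τ)).congr_deriv (by ring)

end Flux

theorem stmt_10_general
    (β τ lam α μ₁ : ℝ)
    (u : ℝ → ℝ) (hu : ContDiff ℝ 4 u)
    (hu_bc : u (-1) = 0 ∧ u 1 = 0 ∧ deriv u (-1) = 0 ∧ deriv u 1 = 0)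
    (G : ℝ → ℝ) (hG_cont : ContinuousOn G (Icc (-1 : ℝ) 1))
    (hu_eq : ∀ x ∈ Ioo (-1 : ℝ) 1,
      β * iteratedDeriv 4 u x - τ * iteratedDeriv 2 u x = - lam * G x)
    (ζ : ℝ → ℝ) (hζ : ContDiff ℝ 4 ζ)
    (hζ_bc : ζ (-1) = 0 ∧ ζ 1 = 0 ∧ deriv ζ (-1) = 0 ∧ deriv ζ 1 = 0)
    (hζ_eq : ∀ x ∈ Ioo (-1 : ℝ) 1,
      β * iteratedDeriv 4 ζ x - τ * iteratedDeriv 2 ζ x = μ₁ * ζ x)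
    (U : ℝ → ℝ) (hU : ContDiff ℝ 2 U)
    (hU_eq : ∀ x ∈ Ioo (-1 : ℝ) 1, - deriv (deriv U) x = u x) :
    lam * (∫ x in (-1 : ℝ)..1, (1 + α * U x) * ζ x * G x) =
      - μ₁ * (∫ x in (-1 : ℝ)..1, (1 + α * U x) * ζ x * u x)
        - α * β * (∫ x in (-1 : ℝ)..1, ζ x * (deriv u x) ^ 2)
        - α * (∫ x in (-1 : ℝ)..1,
            (4 * β * iteratedDeriv 3 ζ x - 2 * τ * deriv ζ x) * u x * deriv U x)
        - α * (∫ x in (-1 : ℝ)..1,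
            (τ * ζ x - 9 * β / 2 * iteratedDeriv 2 ζ x) * (u x) ^ 2) := by
  have hU' : ∀ x ∈ Ioo (-1 : ℝ) 1, HasDerivAt (deriv U) (-u x) x := fun x hx => by
    simpa [iteratedDeriv_succ, ← hU_eq x hx] using
      hU.hasDerivAt_iteratedDeriv (m := 1) (by norm_num) x
  have hflux : ∀ x ∈ Ioo (-1 : ℝ) 1, HasDerivAt (flux β τ α u ζ U)
      (-(lam * ((1 + α * U x) * ζ x * G x)) - μ₁ * ((1 + α * U x) * ζ x * u x)
        - α * β * (ζ x * deriv u x ^ 2)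
        - α * ((4 * β * iteratedDeriv 3 ζ x - 2 * τ * deriv ζ x) * u x * deriv U x)
        - α * ((τ * ζ x - 9 * β / 2 * iteratedDeriv 2 ζ x) * u x ^ 2)) x := fun x hx =>
    (hasDerivAt_flux hu hζ (hU.differentiable (by norm_num) x) (hU' x hx)).congr_deriv
      (by linear_combination (1 + α * U x) * ζ x * hu_eq x hx -
        (1 + α * U x) * u x * hζ_eq x hx)
  have := hζ.continuous_iteratedDeriv 2 (by norm_num)
  have := hζ.continuous_iteratedDeriv 3 (by norm_num)
  have := hu.continuous_deriv (by norm_num)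
  have := hζ.continuous_deriv (by norm_num)
  have := hU.continuous_deriv (by norm_num)
  have := hu.continuous
  have := hζ.continuous
  have := hU.continuous
  have hI : ∀ f : ℝ → ℝ, ContinuousOn f (Icc (-1 : ℝ) 1) →
      IntervalIntegrable f MeasureTheory.volume (-1) 1 :=
    fun f hf => hf.intervalIntegrable_of_Icc (by norm_num)
  have hFTC := integral_eq_sub_of_hasDerivAt_of_le (by norm_num)
    (continuous_flux (hu.of_le (by norm_num)) (hζ.of_le (by norm_num))
      (hU.of_le (by norm_num))).continuousOn hflux (hI _ (by fun_prop))
  rw [flux_eq_zero hu_bc.2.1 hu_bc.2.2.2 hζ_bc.2.1 hζ_bc.2.2.2,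
    flux_eq_zero hu_bc.1 hu_bc.2.2.1 hζ_bc.1 hζ_bc.2.2.1,
    integral_sub, integral_sub, integral_sub, integral_sub, integral_neg] at hFTC
  · simp only [integral_const_mul] at hFTC
    linarith
  all_goals exact hI _ (by fun_prop)

/-- The key integration-by-parts identity of the non-existence proof:
multiplying `β u'''' − τ u'' = −λ G` by the test function `(1 + αU) ζ`. -/
theorem stmt_10
    (β τ lam α μ₁ : ℝ) (hβ : 0 < β) (hτ : 0 ≤ τ)
    (u : ℝ → ℝ) (hu : ContDiff ℝ 4 u)
    (hu_bc : u (-1) = 0 ∧ u 1 = 0 ∧ deriv u (-1) = 0 ∧ deriv u 1 = 0)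
    (G : ℝ → ℝ) (hG_cont : ContinuousOn G (Icc (-1 : ℝ) 1))
    (hu_eq : ∀ x ∈ Ioo (-1 : ℝ) 1,
      β * iteratedDeriv 4 u x - τ * iteratedDeriv 2 u x = - lam * G x)
    (ζ : ℝ → ℝ) (hζ : ContDiff ℝ 4 ζ)
    (hζ_bc : ζ (-1) = 0 ∧ ζ 1 = 0 ∧ deriv ζ (-1) = 0 ∧ deriv ζ 1 = 0)
    (hζ_eq : ∀ x ∈ Ioo (-1 : ℝ) 1,
      β * iteratedDeriv 4 ζ x - τ * iteratedDeriv 2 ζ x = μ₁ * ζ x)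
    (U : ℝ → ℝ) (hU : ContDiff ℝ 2 U)
    (hU_eq : ∀ x ∈ Ioo (-1 : ℝ) 1, - deriv (deriv U) x = u x)
    (hU_bc : U (-1) = 0 ∧ U 1 = 0) :
    lam * (∫ x in (-1 : ℝ)..1, (1 + α * U x) * ζ x * G x) =
      - μ₁ * (∫ x in (-1 : ℝ)..1, (1 + α * U x) * ζ x * u x)
        - α * β * (∫ x in (-1 : ℝ)..1, ζ x * (deriv u x) ^ 2)
        - α * (∫ x in (-1 : ℝ)..1,
            (4 * β * iteratedDeriv 3 ζ x - 2 * τ * deriv ζ x) * u x * deriv U x)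
        - α * (∫ x in (-1 : ℝ)..1,
            (τ * ζ x - 9 * β / 2 * iteratedDeriv 2 ζ x) * (u x) ^ 2) :=
  stmt_10_general β τ lam α μ₁ u hu hu_bc G hG_cont hu_eq ζ hζ hζ_bc hζ_eq U hU hU_eq
end
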